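/- arXiv:2509.03046 — 4 statements merged into one kernel-verified Lean document; each statement's English description precedes it below -/
import Mathlib

section
/- Let m ≥ 0 be an integer and f = (f_0, …, f_m) a solenoidal rank-m symmetric tensor field on ℝ² with Schwartz components. Then for every 0 ≤ j ≤ m, every q > 0 and every θ ∈ ℝ, cos^{m−j}θ · f̂_j(q cos θ, q sin θ) = (−1)^{m−j} sin^{m−j}θ · f̂_m(q cos θ, q sin θ), where f̂_j denotes the 2-dimensional Fourier transform of f_j. -/
open MeasureTheory Filter

noncomputable section

/-- The 2D Fourier transform with the `(2π)⁻¹` normalization: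
`ĝ(y) = (2π)⁻¹ ∫ e^{-i⟨y,x⟩} g(x) dx`. -/
def fourier2 (g : ℝ × ℝ → ℂ) (y : ℝ × ℝ) : ℂ :=
  ((2 * Real.pi : ℝ) : ℂ)⁻¹ *
    ∫ x : ℝ × ℝ, Complex.exp (-Complex.I * ((y.1 * x.1 + y.2 * x.2 : ℝ) : ℂ)) * g x

/-- Fourier transform in the first variable `p`:
`ψ̂(q,θ) = (2π)^{-1/2} ∫ e^{-iqp} ψ(p,θ) dp`. -/
def fourierP (ψ : ℝ → ℝ → ℂ) (q θ : ℝ) : ℂ :=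
  ((Real.sqrt (2 * Real.pi) : ℝ) : ℂ)⁻¹ *
    ∫ p : ℝ, Complex.exp (-Complex.I * ((q * p : ℝ) : ℂ)) * ψ p θ

/-- Fourier coefficients in the second (angular) variable:
`ψ_l(p) = (2π)⁻¹ ∫_0^{2π} ψ(p,θ) e^{-ilθ} dθ`. -/
def thetaCoeff (ψ : ℝ → ℝ → ℂ) (l : ℤ) (p : ℝ) : ℂ :=
  ((2 * Real.pi : ℝ) : ℂ)⁻¹ *
    ∫ θ in (0:ℝ)..(2 * Real.pi), ψ p θ * Complex.exp (-Complex.I * (l : ℂ) * (θ : ℂ))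

/-- Fourier coefficients of a function on `ℝ²` written in polar coordinates:
`g_l(q) = (2π)⁻¹ ∫_0^{2π} g(q cos θ, q sin θ) e^{-ilθ} dθ`. -/
def polarCoeff (g : ℝ × ℝ → ℂ) (l : ℤ) (q : ℝ) : ℂ :=
  ((2 * Real.pi : ℝ) : ℂ)⁻¹ *
    ∫ θ in (0:ℝ)..(2 * Real.pi),
      g (q * Real.cos θ, q * Real.sin θ) * Complex.exp (-Complex.I * (l : ℂ) * (θ : ℂ))

/-- `ψ̃(p,θ) = sin^m θ · ψ(p,θ)`. -/
def tilde (m : ℕ) (ψ : ℝ → ℝ → ℂ) : ℝ → ℝ → ℂ :=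
  fun p θ => ((Real.sin θ : ℝ) : ℂ) ^ m * ψ p θ

/-- The ray transform of a rank-`m` symmetric tensor field `f = (f_0, …, f_m)` on `ℝ²`
with Schwartz components. -/
def rayTransform (m : ℕ) (f : Fin (m + 1) → SchwartzMap (ℝ × ℝ) ℂ) (p θ : ℝ) : ℂ :=
  ∫ t : ℝ, ∑ j : Fin (m + 1),
    (m.choose j : ℂ) *
      f j (-p * Real.sin θ + t * Real.cos θ, p * Real.cos θ + t * Real.sin θ) *
      ((Real.cos θ : ℝ) : ℂ) ^ (m - (j : ℕ)) * ((Real.sin θ : ℝ) : ℂ) ^ (j : ℕ)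

/-- A tensor field `f = (f_0, …, f_m)` is solenoidal iff
`∂f_j/∂x + ∂f_{j+1}/∂y = 0` for `0 ≤ j ≤ m - 1`. -/
def Solenoidal (m : ℕ) (f : Fin (m + 1) → SchwartzMap (ℝ × ℝ) ℂ) : Prop :=
  ∀ j : Fin m, ∀ x : ℝ × ℝ,
    fderiv ℝ (⇑(f j.castSucc)) x (1, 0) + fderiv ℝ (⇑(f j.succ)) x (0, 1) = 0

/-- The Schwartz space `S(TS¹)`: smooth functions `ψ(p,θ)`, `2π`-periodic in `θ`,
with all seminorms `sup (1+|p|)^k |∂_p^a ∂_θ^b ψ|` finite. -/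
structure IsSchwartzTS (ψ : ℝ → ℝ → ℂ) : Prop where
  smooth : ContDiff ℝ (⊤ : ℕ∞) (fun x : ℝ × ℝ => ψ x.1 x.2)
  periodic : ∀ p θ : ℝ, ψ p (θ + 2 * Real.pi) = ψ p θ
  decay : ∀ k a b : ℕ, ∃ C : ℝ, ∀ p θ : ℝ,
    (1 + |p|) ^ k *
      ‖iteratedDeriv a (fun p' => iteratedDeriv b (fun θ' => ψ p' θ') θ) p‖ ≤ C

/-- The subspace `S_{π(m)}(TS¹)` of functions with parity `ψ(-p, θ+π) = (-1)^m ψ(p,θ)`. -/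
def IsSchwartzTSpi (m : ℕ) (ψ : ℝ → ℝ → ℂ) : Prop :=
  IsSchwartzTS ψ ∧ ∀ p θ : ℝ, ψ (-p) (θ + Real.pi) = (-1 : ℂ) ^ m * ψ p θ

/-- The subspace `S_{π(m),0}(TS¹)` of functions whose Fourier transform in `p`
vanishes near `q = 0`. -/
def IsSchwartzTSpi0 (m : ℕ) (ψ : ℝ → ℝ → ℂ) : Prop :=
  IsSchwartzTSpi m ψ ∧ ∃ ε > (0:ℝ), ∀ q θ : ℝ, |q| ≤ ε → fourierP ψ q θ = 0

/-- Squared norm of `H^{r,s}_{t,π(m)}(TS¹)`. -/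
def sobNormSqTS (m : ℕ) (r s t : ℝ) (ψ : ℝ → ℝ → ℂ) : ℝ :=
  (4 * Real.pi)⁻¹ * ∑' l : ℤ, (1 + (l : ℝ) ^ 2) ^ r *
    ∫ q : ℝ, |q| ^ (2 * t) * (1 + q ^ 2) ^ (s - t) *
      ‖thetaCoeff (fourierP (tilde m ψ)) l q‖ ^ 2

/-- Squared norm of `H^{r,s}_{t,sol}(ℝ²; S^m ℝ²)` (expressed through the last
component `f_m` of the solenoidal field). -/
def sobNormSqSol (m : ℕ) (r s t : ℝ) (f : Fin (m + 1) → SchwartzMap (ℝ × ℝ) ℂ) : ℝ :=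
  (2 * Real.pi)⁻¹ * ∑' l : ℤ, (1 + (l : ℝ) ^ 2) ^ r *
    ∫ p in Set.Ioi (0:ℝ), p ^ (2 * t + 1) * (1 + p ^ 2) ^ (s - t) *
      ‖polarCoeff (fourier2 ⇑(f (Fin.last m))) l p‖ ^ 2


def myL : (ℝ × ℝ) →L[ℝ] (ℝ × ℝ) →L[ℝ] ℝ :=
  LinearMap.mkContinuous₂
    (LinearMap.mk₂ ℝ (fun v w => (2 * Real.pi)⁻¹ * (v.1 * w.1 + v.2 * w.2))
      (fun m m' n => by simp; ring)
      (fun c m n => by simp; ring)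
      (fun m n n' => by simp; ring)
      (fun c m n => by simp; ring))
    2
    (by
      intro v w
      simp only [LinearMap.mk₂_apply, Real.norm_eq_abs]
      have h1 : |v.1| ≤ ‖v‖ := by simpa using norm_fst_le v
      have h2 : |v.2| ≤ ‖v‖ := by simpa using norm_snd_le v
      have h3 : |w.1| ≤ ‖w‖ := by simpa using norm_fst_le w
      have h4 : |w.2| ≤ ‖w‖ := by simpa using norm_snd_le w
      have hπ : (2 * Real.pi)⁻¹ ≤ 1 := by
        rw [inv_le_one_iff₀]; right; nlinarith [Real.pi_gt_three]
      have hπ0 : (0:ℝ) ≤ (2 * Real.pi)⁻¹ := by positivity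
      calc |(2 * Real.pi)⁻¹ * (v.1 * w.1 + v.2 * w.2)|
          = (2 * Real.pi)⁻¹ * |v.1 * w.1 + v.2 * w.2| := by
            rw [abs_mul, _root_.abs_of_nonneg hπ0]
        _ ≤ 1 * (|v.1| * |w.1| + |v.2| * |w.2|) := by
            apply mul_le_mul hπ ((abs_add_le _ _).trans (by rw [abs_mul, abs_mul])) (abs_nonneg _)
              zero_le_one
        _ ≤ 2 * ‖v‖ * ‖w‖ := by
            nlinarith [mul_le_mul h1 h3 (abs_nonneg w.1) (norm_nonneg v),
              mul_le_mul h2 h4 (abs_nonneg w.2) (norm_nonneg v),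
              norm_nonneg v, norm_nonneg w])

lemma myL_apply (v w : ℝ × ℝ) : myL v w = (2 * Real.pi)⁻¹ * (v.1 * w.1 + v.2 * w.2) := rfl

lemma char_eq (x w : ℝ × ℝ) :
    (Real.fourierChar (-((2 * Real.pi)⁻¹ * (x.1 * w.1 + x.2 * w.2))) : ℂ) =
      Complex.exp (-Complex.I * ((w.1 * x.1 + w.2 * x.2 : ℝ) : ℂ)) := by
  rw [Real.fourierChar_apply]
  congr 1
  have hπ : (Real.pi : ℂ) ≠ 0 := by exact_mod_cast Real.pi_ne_zero
  push_cast
  field_simp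

lemma key (g : SchwartzMap (ℝ × ℝ) ℂ) (w v : ℝ × ℝ) :
    ∫ x : ℝ × ℝ, Complex.exp (-Complex.I * ((w.1 * x.1 + w.2 * x.2 : ℝ) : ℂ)) * fderiv ℝ (⇑g) x v
      = Complex.I * ((w.1 * v.1 + w.2 * v.2 : ℝ) : ℂ) *
        ∫ x : ℝ × ℝ, Complex.exp (-Complex.I * ((w.1 * x.1 + w.2 * x.2 : ℝ) : ℂ)) * g x := by
  have hint : Integrable (fderiv ℝ (⇑g)) (volume : Measure (ℝ × ℝ)) := by
    have := (SchwartzMap.fderivCLM ℝ (ℝ × ℝ) ℂ g).integrable (μ := (volume : Measure (ℝ × ℝ)))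
    exact this
  have h := VectorFourier.fourierIntegral_fderiv (L := myL) (μ := volume)
    g.integrable g.differentiable hint
  have h2 := congrFun h w
  have h3 := congrArg (fun T => T v) h2
  rw [VectorFourier.fourierIntegral_continuousLinearMap_apply Real.continuous_fourierChar hint]
    at h3
  simp only [VectorFourier.fourierIntegral, ContinuousLinearMap.toLinearMap₁₂_apply_apply_apply,
    VectorFourier.fourierSMulRight_apply, ContinuousLinearMap.neg_apply,
    ContinuousLinearMap.flip_apply, Circle.smul_def, smul_eq_mul,
    Complex.real_smul, myL_apply] at h3
  simp only [char_eq] at h3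

  rw [h3]
  have hπ : (Real.pi : ℂ) ≠ 0 := by exact_mod_cast Real.pi_ne_zero
  push_cast
  field_simp

lemma solStep (m : ℕ) (f : Fin (m + 1) → SchwartzMap (ℝ × ℝ) ℂ)
    (hf : Solenoidal m f) (i : Fin m) (q : ℝ) (hq : q ≠ 0) (θ : ℝ) :
    ((Real.cos θ : ℝ) : ℂ) * fourier2 (⇑(f i.castSucc)) (q * Real.cos θ, q * Real.sin θ) =
      -(((Real.sin θ : ℝ) : ℂ) * fourier2 (⇑(f i.succ)) (q * Real.cos θ, q * Real.sin θ)) := by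
  set w : ℝ × ℝ := (q * Real.cos θ, q * Real.sin θ) with hw
  have k1 := key (f i.castSucc) w (1, 0)
  have k2 := key (f i.succ) w (0, 1)
  have heq : (∫ x : ℝ × ℝ, Complex.exp (-Complex.I * ((w.1 * x.1 + w.2 * x.2 : ℝ) : ℂ)) *
      fderiv ℝ (⇑(f i.castSucc)) x (1, 0))
      = ∫ x : ℝ × ℝ, Complex.exp (-Complex.I * ((w.1 * x.1 + w.2 * x.2 : ℝ) : ℂ)) *
        (-(fderiv ℝ (⇑(f i.succ)) x (0, 1))) := by
    congr 1
    funext x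
    have := hf i x
    have : fderiv ℝ (⇑(f i.castSucc)) x (1, 0) = -(fderiv ℝ (⇑(f i.succ)) x (0, 1)) := by
      linear_combination this
    rw [this]
  simp only [mul_neg] at heq
  rw [integral_neg] at heq
  rw [k1, k2] at heq
  -- heq : I * (w1*1 + w2*0) * F₁ = -(I * (w1*0 + w2*1) * F₂)
  have hqI : (Complex.I * (q : ℂ)) ≠ 0 := by
    simp [Complex.I_ne_zero, hq]
  have hmain : ((Real.cos θ : ℝ) : ℂ) *
      (∫ x : ℝ × ℝ, Complex.exp (-Complex.I * ((w.1 * x.1 + w.2 * x.2 : ℝ) : ℂ)) *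
        f i.castSucc x)
      = -(((Real.sin θ : ℝ) : ℂ) *
      (∫ x : ℝ × ℝ, Complex.exp (-Complex.I * ((w.1 * x.1 + w.2 * x.2 : ℝ) : ℂ)) *
        f i.succ x)) := by
    apply mul_left_cancel₀ hqI
    have hw1 : w.1 = q * Real.cos θ := rfl
    have hw2 : w.2 = q * Real.sin θ := rfl
    rw [hw1, hw2] at heq ⊢
    push_cast at heq ⊢
    linear_combination heq
  simp only [fourier2]
  linear_combination (((2 * Real.pi : ℝ) : ℂ))⁻¹ * hmain

lemma solAux (m : ℕ) (f : Fin (m + 1) → SchwartzMap (ℝ × ℝ) ℂ)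
    (hf : Solenoidal m f) (q : ℝ) (hq : q ≠ 0) (θ : ℝ) :
    ∀ k : ℕ, ∀ j : Fin (m + 1), (j : ℕ) + k = m →
    ((Real.cos θ : ℝ) : ℂ) ^ k * fourier2 (⇑(f j)) (q * Real.cos θ, q * Real.sin θ) =
      (-1 : ℂ) ^ k * ((Real.sin θ : ℝ) : ℂ) ^ k *
        fourier2 (⇑(f (Fin.last m))) (q * Real.cos θ, q * Real.sin θ) := by
  intro k
  induction k with
  | zero =>
    intro j hj
    have : j = Fin.last m := Fin.ext (by simpa using hj)
    subst this
    simp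
  | succ k ih =>
    intro j hj
    have hjlt : (j : ℕ) < m := by omega
    set i : Fin m := ⟨(j : ℕ), hjlt⟩ with hi
    have hcast : i.castSucc = j := Fin.ext rfl
    have hstep := solStep m f hf i q hq θ
    rw [hcast] at hstep
    have hih := ih i.succ (by simp only [Fin.val_succ, hi]; omega)
    rw [pow_succ, pow_succ, pow_succ]
    linear_combination ((Real.cos θ : ℝ) : ℂ) ^ k * hstep
      - ((Real.sin θ : ℝ) : ℂ) * hih

/-- For a solenoidal rank-`m` Schwartz tensor field `f` on `ℝ²`, for every `0 ≤ j ≤ m`: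
`cos^{m-j}θ · f̂_j(q cos θ, q sin θ) = (-1)^{m-j} sin^{m-j}θ · f̂_m(q cos θ, q sin θ)`
for `q > 0`. -/
theorem solenoidal_fourier_relation (m : ℕ) (f : Fin (m + 1) → SchwartzMap (ℝ × ℝ) ℂ)
    (hf : Solenoidal m f) (j : Fin (m + 1)) (q : ℝ) (hq : 0 < q) (θ : ℝ) :
    ((Real.cos θ : ℝ) : ℂ) ^ (m - (j : ℕ)) *
        fourier2 ⇑(f j) (q * Real.cos θ, q * Real.sin θ) =
      (-1 : ℂ) ^ (m - (j : ℕ)) * ((Real.sin θ : ℝ) : ℂ) ^ (m - (j : ℕ)) *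
        fourier2 ⇑(f (Fin.last m)) (q * Real.cos θ, q * Real.sin θ) := by
  have hjm : (j : ℕ) < m + 1 := j.isLt
  have hj : (j : ℕ) + (m - (j : ℕ)) = m := by omega
  exact solAux m f hf q hq.ne' θ (m - (j : ℕ)) j hj

end
end

section
/- Fourier slice theorem for the 2D ray transform of scalar functions in polar coordinates: for every Schwartz function g ∈ S(ℝ²), every q ∈ ℝ and every θ ∈ ℝ, (I_0 g)^(q,θ) = √(2π) · ĝ(−q sin θ, q cos θ), where I_0 g(p,θ) = ∫_ℝ g(−p sin θ + t cos θ, p cos θ + t sin θ) dt, (I_0 g)^ is the Fourier transform of I_0 g in p, and ĝ is the 2-dimensional Fourier transform of g. -/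
open MeasureTheory Filter

noncomputable section

def rotMap (θ : ℝ) : (ℝ × ℝ) →ₗ[ℝ] (ℝ × ℝ) :=
  Matrix.toLin (Module.Basis.finTwoProd ℝ) (Module.Basis.finTwoProd ℝ)
    !![-Real.sin θ, Real.cos θ; Real.cos θ, Real.sin θ]

lemma rotMap_apply (θ : ℝ) (z : ℝ × ℝ) :
    rotMap θ z = (-Real.sin θ * z.1 + Real.cos θ * z.2,
      Real.cos θ * z.1 + Real.sin θ * z.2) := by
  simp [rotMap, Matrix.toLin_finTwoProd_apply]

lemma rotMap_det (θ : ℝ) : LinearMap.det (rotMap θ) = -1 := by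
  rw [rotMap, LinearMap.det_toLin, Matrix.det_fin_two_of]
  have := Real.sin_sq_add_cos_sq θ
  nlinarith

lemma rotMap_involutive (θ : ℝ) : Function.Involutive (rotMap θ) := by
  intro z
  simp only [rotMap_apply]
  have h := Real.sin_sq_add_cos_sq θ
  ext
  · show -Real.sin θ * _ + Real.cos θ * _ = z.1
    linear_combination z.1 * h
  · show Real.cos θ * _ + Real.sin θ * _ = z.2
    linear_combination z.2 * h

lemma rotMap_measurePreserving (θ : ℝ) :
    MeasurePreserving (rotMap θ) (volume : Measure (ℝ × ℝ)) volume := by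
  constructor
  · exact (LinearMap.continuous_of_finiteDimensional _).measurable
  · rw [Measure.map_linearMap_addHaar_eq_smul_addHaar _ (by rw [rotMap_det]; norm_num)]
    rw [rotMap_det, show |(-1:ℝ)⁻¹| = 1 by norm_num]
    simp


/-- **Fourier slice theorem for the 2D ray transform of scalar functions** in polar
coordinates: `(I_0 g)^(q,θ) = √(2π) · ĝ(-q sin θ, q cos θ)` for every Schwartz `g`. -/
theorem fourier_slice_scalar (g : SchwartzMap (ℝ × ℝ) ℂ) (q θ : ℝ) :
    fourierP (fun p θ' => ∫ t : ℝ,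
        g (-p * Real.sin θ' + t * Real.cos θ', p * Real.cos θ' + t * Real.sin θ')) q θ =
      ((Real.sqrt (2 * Real.pi) : ℝ) : ℂ) *
        fourier2 ⇑g (-q * Real.sin θ, q * Real.cos θ) := by
  have hMP := rotMap_measurePreserving θ
  have hcont : Continuous (rotMap θ) := LinearMap.continuous_of_finiteDimensional _
  have hEmb : MeasurableEmbedding (rotMap θ) :=
    (Homeomorph.mk (rotMap_involutive θ).toPerm hcont hcont).measurableEmbedding
  have key :
      (∫ x : ℝ × ℝ, Complex.exp (-Complex.I *
          (((-q * Real.sin θ, q * Real.cos θ).1 * x.1 +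
            (-q * Real.sin θ, q * Real.cos θ).2 * x.2 : ℝ) : ℂ)) * g x) =
        ∫ p : ℝ, Complex.exp (-Complex.I * ((q * p : ℝ) : ℂ)) *
          ∫ t : ℝ, g (-p * Real.sin θ + t * Real.cos θ, p * Real.cos θ + t * Real.sin θ) := by
    rw [← hMP.integral_comp hEmb]
    have heq : ∀ z : ℝ × ℝ,
        Complex.exp (-Complex.I *
          (((-q * Real.sin θ, q * Real.cos θ).1 * (rotMap θ z).1 +
            (-q * Real.sin θ, q * Real.cos θ).2 * (rotMap θ z).2 : ℝ) : ℂ)) * g (rotMap θ z) =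
        Complex.exp (-Complex.I * ((q * z.1 : ℝ) : ℂ)) *
          g (-z.1 * Real.sin θ + z.2 * Real.cos θ, z.1 * Real.cos θ + z.2 * Real.sin θ) := by
      intro z
      have h := Real.sin_sq_add_cos_sq θ
      have h1 : ((-q * Real.sin θ, q * Real.cos θ).1 * (rotMap θ z).1 +
          (-q * Real.sin θ, q * Real.cos θ).2 * (rotMap θ z).2 : ℝ) = q * z.1 := by
        simp only [rotMap_apply]
        linear_combination (q * z.1) * h
      have h2 : rotMap θ z = (-z.1 * Real.sin θ + z.2 * Real.cos θ,
          z.1 * Real.cos θ + z.2 * Real.sin θ) := by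
        rw [rotMap_apply]; ext <;> simp <;> ring
      rw [h1, h2]
    simp only [heq]
    have hint : Integrable (fun z : ℝ × ℝ => Complex.exp (-Complex.I * ((q * z.1 : ℝ) : ℂ)) *
        g (-z.1 * Real.sin θ + z.2 * Real.cos θ, z.1 * Real.cos θ + z.2 * Real.sin θ))
        volume := by
      have h1 : Integrable (fun z : ℝ × ℝ => g (rotMap θ z)) volume :=
        (hMP.integrable_comp_emb hEmb).mpr (g.integrable (μ := volume))
      have h1' : Integrable (fun z : ℝ × ℝ =>
          g (-z.1 * Real.sin θ + z.2 * Real.cos θ, z.1 * Real.cos θ + z.2 * Real.sin θ))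
          volume := by
        refine h1.congr (Filter.Eventually.of_forall fun z => ?_)
        show g (rotMap θ z) = _
        rw [rotMap_apply]
        congr 1
        exact Prod.ext (by dsimp; ring) (by dsimp; ring)
      refine h1'.bdd_mul (c := 1) ?_ (Filter.Eventually.of_forall fun z => ?_)
      · exact (Complex.continuous_exp.comp (by fun_prop)).aestronglyMeasurable
      · rw [Complex.norm_exp]
        simp
    rw [show (volume : Measure (ℝ × ℝ)) = volume.prod volume from rfl] at hint ⊢
    rw [MeasureTheory.integral_prod _ hint]
    refine integral_congr_ae (Filter.Eventually.of_forall fun p => ?_)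
    dsimp only
    exact integral_const_mul _ _
  rw [fourierP, fourier2, key]
  have hs : ((Real.sqrt (2 * Real.pi) : ℝ) : ℂ) ^ 2 = ((2 * Real.pi : ℝ) : ℂ) := by
    rw [← Complex.ofReal_pow, Real.sq_sqrt (by positivity)]
  have hne : ((Real.sqrt (2 * Real.pi) : ℝ) : ℂ) ≠ 0 := by
    simp [Real.sqrt_eq_zero', Real.pi_pos.le]
  have hinv : ((2 * Real.pi : ℝ) : ℂ)⁻¹ =
      ((Real.sqrt (2 * Real.pi) : ℝ) : ℂ)⁻¹ * ((Real.sqrt (2 * Real.pi) : ℝ) : ℂ)⁻¹ := by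
    rw [← hs, sq, mul_inv]
  have hc : ((Real.sqrt (2 * Real.pi) : ℝ) : ℂ) * ((Real.sqrt (2 * Real.pi) : ℝ) : ℂ)⁻¹ = 1 :=
    mul_inv_cancel₀ hne
  rw [hinv]
  linear_combination (-(((Real.sqrt (2 * Real.pi) : ℝ) : ℂ)⁻¹ *
    ∫ p : ℝ, Complex.exp (-Complex.I * ((q * p : ℝ) : ℂ)) *
      ∫ t : ℝ, g (-p * Real.sin θ + t * Real.cos θ, p * Real.cos θ + t * Real.sin θ))) * hc

end
end

section
/- Moment conditions (necessity, 2D): let m ≥ 0 be an integer and f = (f_0, …, f_m) a rank-m symmetric tensor field on ℝ² with Schwartz components. Then for every integer r ≥ 0 there exist homogeneous polynomials P_0, …, P_m of degree r in two real variables such that for all θ ∈ ℝ, ∫_ℝ p^r I_m f(p,θ) dp = Σ_{j=0}^m binom(m,j) P_j(−sin θ, cos θ) cos^{m−j}θ sin^jθ. -/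
open MeasureTheory Filter

noncomputable section

namespace MomentAux

lemma integrable_weight (g : SchwartzMap (ℝ × ℝ) ℂ) (w : ℝ × ℝ → ℂ) (hw : Continuous w)
    (n : ℕ) (C : ℝ) (hC : ∀ z : ℝ × ℝ, ‖w z‖ ≤ C * ‖z‖ ^ n) :
    Integrable (fun z : ℝ × ℝ => w z * g z) := by
  have h := (g.integrable_pow_mul volume n).const_mul C
  refine h.mono' ((hw.mul g.continuous).aestronglyMeasurable) (ae_of_all _ fun z => ?_)
  calc ‖w z * g z‖ = ‖w z‖ * ‖g z‖ := norm_mul _ _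
    _ ≤ (C * ‖z‖ ^ n) * ‖g z‖ := mul_le_mul_of_nonneg_right (hC z) (norm_nonneg _)
    _ = C * (‖z‖ ^ n * ‖g z‖) := by ring

def refl2 (s c : ℝ) (h : s * s + c * c = 1) : (ℝ × ℝ) ≃ₗ[ℝ] ℝ × ℝ where
  toFun z := (-z.1 * s + z.2 * c, z.1 * c + z.2 * s)
  invFun z := (-z.1 * s + z.2 * c, z.1 * c + z.2 * s)
  map_add' a b := by
    refine Prod.ext ?_ ?_ <;> simp <;> ring
  map_smul' t a := by
    refine Prod.ext ?_ ?_ <;> simp <;> ring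
  left_inv z := by
    refine Prod.ext ?_ ?_ <;> simp only
    · linear_combination z.1 * h
    · linear_combination z.2 * h
  right_inv z := by
    refine Prod.ext ?_ ?_ <;> simp only
    · linear_combination z.1 * h
    · linear_combination z.2 * h

lemma refl2_apply (s c : ℝ) (h : s * s + c * c = 1) (z : ℝ × ℝ) :
    refl2 s c h z = (-z.1 * s + z.2 * c, z.1 * c + z.2 * s) := rfl

lemma refl2_invol (s c : ℝ) (h : s * s + c * c = 1) (z : ℝ × ℝ) :
    refl2 s c h (refl2 s c h z) = z := (refl2 s c h).left_inv z

lemma refl2_det (s c : ℝ) (h : s * s + c * c = 1) :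
    LinearMap.det ((refl2 s c h : (ℝ × ℝ) →ₗ[ℝ] ℝ × ℝ)) = -1 := by
  rw [← LinearMap.det_toMatrix (Module.Basis.finTwoProd ℝ), Matrix.det_fin_two]
  simp [LinearMap.toMatrix_apply, Module.Basis.coe_finTwoProd_repr, refl2,
    Module.Basis.finTwoProd_zero, Module.Basis.finTwoProd_one]
  linarith [h]

lemma refl2_continuous (s c : ℝ) (h : s * s + c * c = 1) :
    Continuous (refl2 s c h) := by
  have : (⇑(refl2 s c h) : ℝ × ℝ → ℝ × ℝ)
      = fun z : ℝ × ℝ => (-z.1 * s + z.2 * c, z.1 * c + z.2 * s) := rfl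
  rw [this]; fun_prop

lemma refl2_measurePreserving (s c : ℝ) (h : s * s + c * c = 1) :
    MeasurePreserving (refl2 s c h) volume volume := by
  refine ⟨(refl2_continuous s c h).measurable, ?_⟩
  have hd := refl2_det s c h
  have hne : LinearMap.det ((refl2 s c h : (ℝ × ℝ) →ₗ[ℝ] ℝ × ℝ)) ≠ 0 := by
    rw [hd]; norm_num
  have hmap := MeasureTheory.Measure.map_linearMap_addHaar_eq_smul_addHaar volume hne
  simp only [LinearEquiv.coe_coe] at hmap
  rw [hmap, hd]
  have h1 : |((-1 : ℝ))⁻¹| = 1 := by norm_num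
  rw [h1, ENNReal.ofReal_one, one_smul]

lemma refl2_embedding (s c : ℝ) (h : s * s + c * c = 1) :
    MeasurableEmbedding (refl2 s c h) :=
  (refl2 s c h).toContinuousLinearEquiv.toHomeomorph.measurableEmbedding

end MomentAux

open MomentAux in
/-- **Moment conditions, necessity (2D)**: for every rank-`m` Schwartz tensor field `f`
on `ℝ²` and every integer `r ≥ 0` there exist homogeneous polynomials `P_0, …, P_m` of
degree `r` in two variables such that
`∫ p^r I_m f(p,θ) dp = Σ_j binom(m,j) P_j(-sin θ, cos θ) cos^{m-j}θ sin^jθ`. -/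
theorem moment_conditions_necessity (m : ℕ) (f : Fin (m + 1) → SchwartzMap (ℝ × ℝ) ℂ)
    (r : ℕ) :
    ∃ P : Fin (m + 1) → MvPolynomial (Fin 2) ℂ,
      (∀ j, (P j).IsHomogeneous r) ∧
      ∀ θ : ℝ,
        (∫ p : ℝ, (p : ℂ) ^ r * rayTransform m f p θ) =
          ∑ j : Fin (m + 1),
            (m.choose j : ℂ) *
              MvPolynomial.eval ![((-Real.sin θ : ℝ) : ℂ), ((Real.cos θ : ℝ) : ℂ)] (P j) *
              ((Real.cos θ : ℝ) : ℂ) ^ (m - (j : ℕ)) *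
              ((Real.sin θ : ℝ) : ℂ) ^ (j : ℕ) := by
  classical
  -- moments of the components
  set μ : Fin (m + 1) → ℕ → ℂ :=
    fun j k => ∫ z : ℝ × ℝ, (z.1 : ℂ) ^ k * (z.2 : ℂ) ^ (r - k) * f j z with hμ
  refine ⟨fun j => ∑ k ∈ Finset.range (r + 1),
      MvPolynomial.C ((r.choose k : ℂ) * μ j k) * MvPolynomial.X 0 ^ k *
        MvPolynomial.X 1 ^ (r - k), ?_, ?_⟩
  · intro j
    refine MvPolynomial.IsHomogeneous.sum _ _ _ fun k hk => ?_
    have hk' : k ≤ r := Nat.lt_succ_iff.mp (Finset.mem_range.mp hk)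
    have h1 : (MvPolynomial.C ((r.choose k : ℂ) * μ j k) * MvPolynomial.X 0 ^ k *
        MvPolynomial.X (1 : Fin 2) ^ (r - k)).IsHomogeneous (0 + k + (r - k)) :=
      ((MvPolynomial.isHomogeneous_C _ _).mul (MvPolynomial.isHomogeneous_X_pow _ _)).mul
        (MvPolynomial.isHomogeneous_X_pow _ _)
    have h2 : 0 + k + (r - k) = r := by omega
    rwa [h2] at h1
  · intro θ
    set s := Real.sin θ with hs
    set c := Real.cos θ with hc
    have hsc : s * s + c * c = 1 := by
      have := Real.sin_sq_add_cos_sq θ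
      rw [hs, hc]; nlinarith [this]
    set T := refl2 s c hsc with hT
    -- constants
    set K : Fin (m + 1) → ℂ :=
      fun j => (m.choose j : ℂ) * ((c : ℝ) : ℂ) ^ (m - (j : ℕ)) * ((s : ℝ) : ℂ) ^ (j : ℕ) with hK
    -- the function on ℝ²
    set H : ℝ × ℝ → ℂ :=
      fun z => ∑ j : Fin (m + 1),
        (((-z.1 * s + z.2 * c : ℝ)) : ℂ) ^ r * K j * f j z with hH
    -- integrability of each summand
    have habs : |s| ≤ 1 ∧ |c| ≤ 1 := by
      constructor <;> rw [abs_le] <;> constructor <;> nlinarith [hsc]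
    have hphi_bound : ∀ z : ℝ × ℝ,
        ‖((((-z.1 * s + z.2 * c : ℝ)) : ℂ)) ^ r‖ ≤ (2 : ℝ) ^ r * ‖z‖ ^ r := by
      intro z
      rw [norm_pow, Complex.norm_real, Real.norm_eq_abs, ← mul_pow]
      refine pow_le_pow_left₀ (abs_nonneg _) ?_ r
      have h1 : |(-z.1 * s + z.2 * c)| ≤ |(-z.1) * s| + |z.2 * c| := abs_add_le _ _
      have h2 : |z.1| ≤ ‖z‖ := by rw [← Real.norm_eq_abs]; exact norm_fst_le z
      have h3 : |z.2| ≤ ‖z‖ := by rw [← Real.norm_eq_abs]; exact norm_snd_le z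
      calc |(-z.1 * s + z.2 * c)| ≤ |(-z.1) * s| + |z.2 * c| := h1
        _ = |z.1| * |s| + |z.2| * |c| := by rw [abs_mul, abs_mul, abs_neg]
        _ ≤ ‖z‖ * 1 + ‖z‖ * 1 := by
            refine add_le_add ?_ ?_ <;>
              exact mul_le_mul (by assumption) (by tauto) (abs_nonneg _)
                (le_trans (abs_nonneg _) (by assumption))
        _ = 2 * ‖z‖ := by ring
    have hIntH : ∀ j : Fin (m + 1),
        Integrable (fun z : ℝ × ℝ =>
          (((-z.1 * s + z.2 * c : ℝ)) : ℂ) ^ r * K j * f j z) := by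
      intro j
      refine integrable_weight (f j)
        (fun z => (((-z.1 * s + z.2 * c : ℝ)) : ℂ) ^ r * K j) (by fun_prop) r
        ((2 : ℝ) ^ r * ‖K j‖) (fun z => ?_)
      rw [norm_mul]
      calc ‖(((-z.1 * s + z.2 * c : ℝ)) : ℂ) ^ r‖ * ‖K j‖
          ≤ ((2 : ℝ) ^ r * ‖z‖ ^ r) * ‖K j‖ :=
            mul_le_mul_of_nonneg_right (hphi_bound z) (norm_nonneg _)
        _ = (2 : ℝ) ^ r * ‖K j‖ * ‖z‖ ^ r := by ring
    have hIntHsum : Integrable H := by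
      rw [hH]
      exact integrable_finset_sum _ fun j _ => hIntH j
    -- Step 1: rewrite the iterated integral as an integral over ℝ² of H ∘ T
    have step1 : (∫ p : ℝ, (p : ℂ) ^ r * rayTransform m f p θ)
        = ∫ p : ℝ, ∫ t : ℝ, H (T (p, t)) := by
      refine integral_congr_ae (Filter.Eventually.of_forall fun p => ?_)
      simp only [rayTransform]
      rw [← integral_const_mul]
      refine integral_congr_ae (Filter.Eventually.of_forall fun t => ?_)
      have hTz : T (p, t) = (-p * s + t * c, p * c + t * s) := refl2_apply s c hsc (p, t)
      rw [hH]
      simp only [hTz]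
      have hreal : (-(-p * s + t * c) * s + (p * c + t * s) * c : ℝ) = p := by
        linear_combination p * hsc
      simp only [hreal]
      rw [Finset.mul_sum]
      refine Finset.sum_congr rfl fun j _ => ?_
      rw [hK, ← hs, ← hc]
      ring
    -- Step 2: Fubini
    have step2 : (∫ p : ℝ, ∫ t : ℝ, H (T (p, t)))
        = ∫ z : ℝ × ℝ, H (T z) := by
      have hint : Integrable (fun z : ℝ × ℝ => H (T z)) :=
        ((refl2_measurePreserving s c hsc).integrable_comp_emb
          (refl2_embedding s c hsc)).2 hIntHsum
      rw [MeasureTheory.Measure.volume_eq_prod] at hint ⊢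
      rw [MeasureTheory.integral_prod _ hint]
    -- Step 3: change of variables
    have step3 : (∫ z : ℝ × ℝ, H (T z)) = ∫ z : ℝ × ℝ, H z :=
      (refl2_measurePreserving s c hsc).integral_comp (refl2_embedding s c hsc) H
    -- Step 4: compute the integral of H
    have step4 : (∫ z : ℝ × ℝ, H z)
        = ∑ j : Fin (m + 1), K j *
            ∫ z : ℝ × ℝ, (((-z.1 * s + z.2 * c : ℝ)) : ℂ) ^ r * f j z := by
      rw [hH, integral_finset_sum _ fun j _ => hIntH j]
      refine Finset.sum_congr rfl fun j _ => ?_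
      rw [← integral_const_mul]
      refine integral_congr_ae (Filter.Eventually.of_forall fun z => ?_)
      ring
    -- Step 5: expand each inner integral using the binomial theorem
    have step5 : ∀ j : Fin (m + 1),
        (∫ z : ℝ × ℝ, (((-z.1 * s + z.2 * c : ℝ)) : ℂ) ^ r * f j z)
          = ∑ k ∈ Finset.range (r + 1),
              (r.choose k : ℂ) * μ j k * (-(s : ℂ)) ^ k * ((c : ℝ) : ℂ) ^ (r - k) := by
      intro j
      have hmono : ∀ k, k ∈ Finset.range (r + 1) → Integrable (fun z : ℝ × ℝ =>
          ((-(s : ℂ)) * (z.1 : ℂ)) ^ k * (((c : ℝ) : ℂ) * (z.2 : ℂ)) ^ (r - k) *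
            (r.choose k : ℂ) * f j z) := by
        intro k hk
        have hk' : k ≤ r := Nat.lt_succ_iff.mp (Finset.mem_range.mp hk)
        refine integrable_weight (f j)
          (fun z => ((-(s : ℂ)) * (z.1 : ℂ)) ^ k * (((c : ℝ) : ℂ) * (z.2 : ℂ)) ^ (r - k) *
            (r.choose k : ℂ)) (by fun_prop) r (r.choose k : ℝ) (fun z => ?_)
        have h2 : |z.1| ≤ ‖z‖ := by rw [← Real.norm_eq_abs]; exact norm_fst_le z
        have h3 : |z.2| ≤ ‖z‖ := by rw [← Real.norm_eq_abs]; exact norm_snd_le z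
        have hz : (0:ℝ) ≤ ‖z‖ := norm_nonneg z
        rw [norm_mul, norm_mul, norm_pow, norm_pow, norm_mul, norm_mul]
        simp only [Complex.norm_real, Real.norm_eq_abs, norm_neg, Complex.norm_natCast]
        have hb1 : |s| * |z.1| ≤ ‖z‖ := by
          have := mul_le_mul habs.1 h2 (abs_nonneg z.1) zero_le_one
          linarith
        have hb2 : |c| * |z.2| ≤ ‖z‖ := by
          have := mul_le_mul habs.2 h3 (abs_nonneg z.2) zero_le_one
          linarith
        calc (|s| * |z.1|) ^ k * (|c| * |z.2|) ^ (r - k) * (r.choose k : ℝ)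
            ≤ ‖z‖ ^ k * ‖z‖ ^ (r - k) * (r.choose k : ℝ) := by
              gcongr <;> positivity
          _ = (r.choose k : ℝ) * ‖z‖ ^ r := by
              rw [← pow_add, Nat.add_sub_cancel' hk']; ring
      have hpt : ∀ z : ℝ × ℝ,
          (((-z.1 * s + z.2 * c : ℝ)) : ℂ) ^ r * f j z
            = ∑ k ∈ Finset.range (r + 1),
                ((-(s : ℂ)) * (z.1 : ℂ)) ^ k * (((c : ℝ) : ℂ) * (z.2 : ℂ)) ^ (r - k) *
                  (r.choose k : ℂ) * f j z := by
        intro z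
        have hbase : (((-z.1 * s + z.2 * c : ℝ)) : ℂ)
            = (-(s : ℂ)) * (z.1 : ℂ) + ((c : ℝ) : ℂ) * (z.2 : ℂ) := by
          push_cast; ring
        rw [hbase, add_pow, Finset.sum_mul]
      calc (∫ z : ℝ × ℝ, (((-z.1 * s + z.2 * c : ℝ)) : ℂ) ^ r * f j z)
          = ∫ z : ℝ × ℝ, ∑ k ∈ Finset.range (r + 1),
              ((-(s : ℂ)) * (z.1 : ℂ)) ^ k * (((c : ℝ) : ℂ) * (z.2 : ℂ)) ^ (r - k) *
                (r.choose k : ℂ) * f j z :=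
            integral_congr_ae (Filter.Eventually.of_forall fun z => hpt z)
        _ = ∑ k ∈ Finset.range (r + 1), ∫ z : ℝ × ℝ,
              ((-(s : ℂ)) * (z.1 : ℂ)) ^ k * (((c : ℝ) : ℂ) * (z.2 : ℂ)) ^ (r - k) *
                (r.choose k : ℂ) * f j z := integral_finset_sum _ hmono
        _ = ∑ k ∈ Finset.range (r + 1),
              (r.choose k : ℂ) * μ j k * (-(s : ℂ)) ^ k * ((c : ℝ) : ℂ) ^ (r - k) := by
            refine Finset.sum_congr rfl fun k hk => ?_
            have hconst : (r.choose k : ℂ) * μ j k * (-(s : ℂ)) ^ k * ((c : ℝ) : ℂ) ^ (r - k)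
                = ((-(s : ℂ)) ^ k * ((c : ℝ) : ℂ) ^ (r - k) * (r.choose k : ℂ)) * μ j k := by
              ring
            rw [hconst]
            simp only [hμ]
            rw [← integral_const_mul]
            refine integral_congr_ae (Filter.Eventually.of_forall fun z => ?_)
            simp only [mul_pow]
            ring
    -- assemble
    rw [step1, step2, step3, step4]
    refine Finset.sum_congr rfl fun j _ => ?_
    rw [step5 j]
    -- evaluate the polynomial
    have heval : MvPolynomial.eval ![((-Real.sin θ : ℝ) : ℂ), ((Real.cos θ : ℝ) : ℂ)]
        (∑ k ∈ Finset.range (r + 1),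
          MvPolynomial.C ((r.choose k : ℂ) * μ j k) * MvPolynomial.X 0 ^ k *
            MvPolynomial.X 1 ^ (r - k))
        = ∑ k ∈ Finset.range (r + 1),
            (r.choose k : ℂ) * μ j k * (((-Real.sin θ : ℝ)) : ℂ) ^ k *
              ((Real.cos θ : ℝ) : ℂ) ^ (r - k) := by
      rw [map_sum]
      refine Finset.sum_congr rfl fun k hk => ?_
      simp [MvPolynomial.eval_mul, MvPolynomial.eval_pow]
    rw [heval, ← hs, ← hc]
    have hcast : (((-s : ℝ)) : ℂ) = -(s : ℂ) := by push_cast; ring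
    rw [hcast]
    simp only [hK, Finset.mul_sum, Finset.sum_mul]
    refine Finset.sum_congr rfl fun k _ => ?_
    ring

end
end

section
/- A solenoidal tensor field is determined by its last component: let m ≥ 0 be an integer and f = (f_0, …, f_m) a solenoidal rank-m symmetric tensor field on ℝ² with Schwartz components. If f_m ≡ 0 on ℝ², then f_j ≡ 0 on ℝ² for every 0 ≤ j ≤ m. -/
open MeasureTheory Filter

noncomputable section

lemma schwartz_zero_of_fderiv_fst (g : SchwartzMap (ℝ × ℝ) ℂ)
    (hg : ∀ x : ℝ × ℝ, fderiv ℝ (⇑g) x (1, 0) = 0) : ∀ x : ℝ × ℝ, g x = 0 := by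
  rintro ⟨a, b⟩
  set h : ℝ → ℂ := fun t => g (t, b) with hh
  have hder : ∀ t : ℝ, HasDerivAt h (fderiv ℝ (⇑g) (t, b) (1, 0)) t := by
    intro t
    exact ((g.differentiable.differentiableAt).hasFDerivAt).comp_hasDerivAt t
      ((hasDerivAt_id t).prodMk (hasDerivAt_const t b))
  have hconst : ∀ t : ℝ, h t = h a := by
    intro t
    exact is_const_of_deriv_eq_zero
      (fun s => ((hder s).differentiableAt)) (fun s => by rw [(hder s).deriv, hg]) t a
  obtain ⟨C, hC⟩ := g.decay 1 0
  have hbound : ∀ t : ℝ, t > 0 → ‖h t‖ ≤ C / t := by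
    intro t ht
    have := hC.2 (t, b)
    rw [norm_iteratedFDeriv_zero] at this
    have h1 : |t| ≤ ‖((t, b) : ℝ × ℝ)‖ := by
      simpa using norm_fst_le ((t, b) : ℝ × ℝ)
    have h2 : t * ‖h t‖ ≤ C := by
      calc t * ‖h t‖ ≤ ‖((t, b) : ℝ × ℝ)‖ ^ 1 * ‖g (t, b)‖ := by
            rw [pow_one]
            exact mul_le_mul_of_nonneg_right (le_trans (le_abs_self t) h1) (norm_nonneg _)
        _ ≤ C := this
    rw [le_div_iff₀ ht]
    linarith [h2]
  have htend : Tendsto h atTop (nhds 0) := by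
    have h0 : Tendsto (fun t : ℝ => C / t) atTop (nhds 0) :=
      tendsto_const_nhds.div_atTop tendsto_id
    refine squeeze_zero_norm' ?_ h0
    filter_upwards [eventually_gt_atTop 0] with t ht using hbound t ht
  have : Tendsto (fun _ : ℝ => h a) atTop (nhds 0) := by
    refine htend.congr fun t => hconst t
  exact tendsto_nhds_unique tendsto_const_nhds this

/-- A solenoidal tensor field is determined by its last component: if `f` is a solenoidal
rank-`m` Schwartz tensor field on `ℝ²` with `f_m ≡ 0`, then `f_j ≡ 0` for all `j`. -/
theorem solenoidal_determined_by_last (m : ℕ) (f : Fin (m + 1) → SchwartzMap (ℝ × ℝ) ℂ)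
    (hf : Solenoidal m f) (h : ∀ x : ℝ × ℝ, f (Fin.last m) x = 0) :
    ∀ j : Fin (m + 1), ∀ x : ℝ × ℝ, f j x = 0 := by
  have key : ∀ k : ℕ, ∀ j : Fin (m + 1), m ≤ (j : ℕ) + k → ∀ x : ℝ × ℝ, f j x = 0 := by
    intro k
    induction k with
    | zero =>
      intro j hj x
      have : j = Fin.last m := by
        apply Fin.ext
        simpa [Fin.last] using le_antisymm (Nat.lt_succ_iff.mp j.isLt) (by simpa using hj)
      rw [this]; exact h x
    | succ k ih =>
      intro j hj x
      by_cases hm : m ≤ (j : ℕ) + k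
      · exact ih j hm x
      · push_neg at hm
        have hjm : (j : ℕ) < m := by omega
        set j' : Fin m := ⟨(j : ℕ), hjm⟩ with hj'
        have hcast : j'.castSucc = j := by
          apply Fin.ext; simp [hj']
        have hsucc : ∀ y : ℝ × ℝ, f j'.succ y = 0 := by
          intro y
          exact ih j'.succ (by simp [hj', Fin.succ]; omega) y
        have hzero : ⇑(f j'.succ) = fun _ : ℝ × ℝ => (0 : ℂ) := funext hsucc
        apply schwartz_zero_of_fderiv_fst (f j)
        intro y
        have := hf j' y
        rw [hcast] at this
        rw [hzero] at this
        simpa [fderiv_const] using this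
  intro j x
  exact key m j (by omega) x


end
end
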